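/- arXiv:1703.01389 — 4 statements merged into one kernel-verified Lean document; each statement's English description precedes it below -/
import Mathlib

section
/- Let λ ∈ ℂ, let U ⊂ ℝ³ \ {0} be open, and let w : U → ℂ be C² with Δw + λ²w = 0 on U. Then v(x) := e^{−iλ|x|} w(x) satisfies, for every x ∈ U, −Δv(x) = (2iλ/|x|)( v(x) + |x| ∂_r v(x) ), i.e. −Δv = (2iλ/r) ∂_r(r v). -/
noncomputable section

open Metric

/-- ℝ³ as a Euclidean space. -/
abbrev E3 : Type := EuclideanSpace ℝ (Fin 3)

/-- standard basis vector of ℝ³ -/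
def ebasis (j : Fin 3) : E3 := EuclideanSpace.single j 1

/-- The Euclidean Laplacian of a complex-valued function on ℝ³. -/
def lap (v : E3 → ℂ) (x : E3) : ℂ :=
  ∑ j : Fin 3, fderiv ℝ (fun y => fderiv ℝ v y (ebasis j)) x (ebasis j)

/-- The radial derivative ∂_r v(x) = (x/|x|)·∇v(x). -/
def radDeriv (v : E3 → ℂ) (x : E3) : ℂ := fderiv ℝ v x (‖x‖⁻¹ • x)

lemma hasFDerivAt_norm_ne_zero {y : E3} (hy : y ≠ 0) :
    HasFDerivAt (fun z : E3 => ‖z‖) (‖y‖⁻¹ • innerSL ℝ y) y := by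
  have hy' : ‖y‖ ≠ 0 := norm_ne_zero_iff.mpr hy
  have hinner : HasFDerivAt (fun z : E3 => (inner ℝ z z : ℝ))
      ((fderivInnerCLM ℝ (y, y)).comp ((ContinuousLinearMap.id ℝ E3).prod
        (ContinuousLinearMap.id ℝ E3))) y :=
    (hasFDerivAt_id y).inner ℝ (hasFDerivAt_id y)
  have hne : (inner ℝ y y : ℝ) ≠ 0 := by
    rw [real_inner_self_eq_norm_mul_norm]
    positivity
  have hsq : HasDerivAt Real.sqrt (1 / (2 * Real.sqrt (inner ℝ y y : ℝ))) ((inner ℝ y y : ℝ)) :=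
    Real.hasDerivAt_sqrt hne
  have hcomp := HasDerivAt.comp_hasFDerivAt (f := fun z : E3 => (inner ℝ z z : ℝ)) y hsq hinner
  have heq : (fun z : E3 => Real.sqrt (inner ℝ z z : ℝ)) = fun z : E3 => ‖z‖ := by
    funext z
    rw [real_inner_self_eq_norm_mul_norm, Real.sqrt_mul_self (norm_nonneg _)]
  rw [Function.comp_def, heq] at hcomp
  refine hcomp.congr_fderiv (Eq.symm ?_)
  ext u
  have hsy : Real.sqrt (inner ℝ y y : ℝ) = ‖y‖ := by
    rw [real_inner_self_eq_norm_mul_norm, Real.sqrt_mul_self (norm_nonneg _)]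
  simp only [ContinuousLinearMap.smul_apply, innerSL_apply_apply, ContinuousLinearMap.coe_smul',
    Pi.smul_apply, ContinuousLinearMap.coe_comp', Function.comp_apply,
    ContinuousLinearMap.prod_apply, ContinuousLinearMap.coe_id', id_eq, fderivInnerCLM_apply,
    hsy, smul_eq_mul]
  rw [real_inner_comm u y]
  field_simp
  ring

lemma phi_hasFDerivAt (lam : ℂ) {y : E3} (hy : y ≠ 0) :
    HasFDerivAt (fun z : E3 => Complex.exp (-(Complex.I * lam * (‖z‖ : ℂ))))
      ((Complex.exp (-(Complex.I * lam * (‖y‖ : ℂ))) * -(Complex.I * lam)) •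
        (Complex.ofRealCLM.comp (‖y‖⁻¹ • innerSL ℝ y))) y := by
  have h1 : HasFDerivAt (fun z : E3 => ((‖z‖ : ℝ) : ℂ))
      (Complex.ofRealCLM.comp (‖y‖⁻¹ • innerSL ℝ y)) y :=
    Complex.ofRealCLM.hasFDerivAt.comp y (hasFDerivAt_norm_ne_zero hy)
  have h2 : HasFDerivAt (fun z : E3 => -(Complex.I * lam * (‖z‖ : ℂ)))
      ((-(Complex.I * lam)) • (Complex.ofRealCLM.comp (‖y‖⁻¹ • innerSL ℝ y))) y := by
    have := h1.const_mul (-(Complex.I * lam))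
    refine this.congr_of_eventuallyEq (Filter.Eventually.of_forall fun z => ?_)
    ring
  have := h2.cexp
  rw [smul_smul] at this
  exact this

lemma inner_ebasis (y : E3) (j : Fin 3) : (innerSL ℝ y) (ebasis j) = y j := by
  simp [ebasis, innerSL_apply_apply, PiLp.inner_apply, EuclideanSpace.single_apply]

set_option maxHeartbeats 2000000 in
/-- If `Δw + λ²w = 0` then `v = e^{-iλr} w` satisfies `-Δv = (2iλ/r) ∂_r (r v)`. -/
theorem helmholtz_conjugated_equation (lam : ℂ) (U : Set E3) (hU : IsOpen U)
    (hU0 : U ⊆ {x : E3 | x ≠ 0}) (w : E3 → ℂ) (hw : ContDiffOn ℝ 2 w U)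
    (hhelm : ∀ y ∈ U, lap w y + lam ^ 2 * w y = 0)
    (v : E3 → ℂ) (hv : ∀ y, v y = Complex.exp (-(Complex.I * lam * (‖y‖ : ℂ))) * w y)
    (x : E3) (hx : x ∈ U) :
    -lap v x = (2 * Complex.I * lam / (‖x‖ : ℂ)) * (v x + (‖x‖ : ℂ) * radDeriv v x) := by
  have hvfun : v = fun y => Complex.exp (-(Complex.I * lam * (‖y‖ : ℂ))) * w y := funext hv
  subst hvfun
  have hx0 : x ≠ 0 := hU0 hx
  have hr : ‖x‖ ≠ 0 := norm_ne_zero_iff.mpr hx0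
  have hrC : ((‖x‖ : ℝ) : ℂ) ≠ 0 := by exact_mod_cast hr
  -- differentiability of w
  have hwd : ∀ y ∈ U, DifferentiableAt ℝ w y := fun y hy =>
    ((hw.differentiableOn (by norm_num)) y hy).differentiableAt (hU.mem_nhds hy)
  have hfw : ContDiffOn ℝ 1 (fderiv ℝ w) U := hw.fderiv_of_isOpen hU (by norm_num)
  have hD2 : DifferentiableAt ℝ (fderiv ℝ w) x :=
    ((hfw.differentiableOn one_ne_zero) x hx).differentiableAt (hU.mem_nhds hx)
  -- derivative of v on U
  have hvd : ∀ y ∈ U, HasFDerivAt (fun z => Complex.exp (-(Complex.I * lam * (‖z‖ : ℂ))) * w z)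
      (Complex.exp (-(Complex.I * lam * (‖y‖ : ℂ))) • fderiv ℝ w y
        + w y • ((Complex.exp (-(Complex.I * lam * (‖y‖ : ℂ))) * -(Complex.I * lam)) •
            (Complex.ofRealCLM.comp (‖y‖⁻¹ • innerSL ℝ y)))) y := fun y hy =>
    (phi_hasFDerivAt lam (hU0 hy)).mul (hwd y hy).hasFDerivAt
  -- first derivative applied to basis vector, as a nice function near x
  have hGF : ∀ j : Fin 3,
      (fun y => fderiv ℝ (fun z => Complex.exp (-(Complex.I * lam * (‖z‖ : ℂ))) * w z) y
        (ebasis j)) =ᶠ[nhds x]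
      (fun y => Complex.exp (-(Complex.I * lam * (‖y‖ : ℂ))) * (fderiv ℝ w y (ebasis j))
        + w y * (Complex.exp (-(Complex.I * lam * (‖y‖ : ℂ))) *
            (-(Complex.I * lam) * ((‖y‖⁻¹ * y j : ℝ) : ℂ)))) := by
    intro j
    filter_upwards [hU.mem_nhds hx] with y hy
    rw [(hvd y hy).fderiv]
    simp only [ContinuousLinearMap.add_apply, ContinuousLinearMap.smul_apply,
      ContinuousLinearMap.coe_comp', Function.comp_apply, Complex.ofRealCLM_apply,
      ContinuousLinearMap.coe_smul', Pi.smul_apply, inner_ebasis, smul_eq_mul]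
    push_cast
    ring
  -- second derivative pieces at x
  have hDwj : ∀ j : Fin 3, HasFDerivAt (fun y => fderiv ℝ w y (ebasis j))
      ((ContinuousLinearMap.apply ℝ ℂ (ebasis j)).comp (fderiv ℝ (fderiv ℝ w) x)) x := fun j =>
    (ContinuousLinearMap.apply ℝ ℂ (ebasis j)).hasFDerivAt.comp x hD2.hasFDerivAt
  have hproj : ∀ j : Fin 3, HasFDerivAt (fun y : E3 => y j) (EuclideanSpace.proj (𝕜 := ℝ) j) x := by
    intro j
    have h := ContinuousLinearMap.hasFDerivAt (x := x)
      (EuclideanSpace.proj (𝕜 := ℝ) (ι := Fin 3) j)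
    simpa using h
  have hninv : HasFDerivAt (fun y : E3 => ‖y‖⁻¹)
      ((-(‖x‖ ^ 2)⁻¹) • (‖x‖⁻¹ • innerSL ℝ x)) x :=
    HasDerivAt.comp_hasFDerivAt (f := fun z : E3 => ‖z‖) x (hasDerivAt_inv hr)
      (hasFDerivAt_norm_ne_zero hx0)
  have hq : ∀ j : Fin 3, HasFDerivAt (fun y : E3 => ‖y‖⁻¹ * y j)
      (‖x‖⁻¹ • (EuclideanSpace.proj (𝕜 := ℝ) j : E3 →L[ℝ] ℝ)
        + (x j) • ((-(‖x‖ ^ 2)⁻¹) • (‖x‖⁻¹ • innerSL ℝ x))) x := fun j =>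
    hninv.mul (hproj j)
  -- second derivative of v in direction ebasis j, at x
  have key : ∀ j : Fin 3,
      fderiv ℝ (fun y => fderiv ℝ (fun z => Complex.exp (-(Complex.I * lam * (‖z‖ : ℂ))) * w z) y
        (ebasis j)) x (ebasis j)
      = Complex.exp (-(Complex.I * lam * (‖x‖ : ℂ))) *
          (fderiv ℝ (fderiv ℝ w) x (ebasis j) (ebasis j))
        + (2 * Complex.exp (-(Complex.I * lam * (‖x‖ : ℂ))) * -(Complex.I * lam) * (‖x‖ : ℂ)⁻¹)
            * ((x j : ℂ) * fderiv ℝ w x (ebasis j))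
        + (w x * Complex.exp (-(Complex.I * lam * (‖x‖ : ℂ))) *
            (-(Complex.I * lam) * -(Complex.I * lam) * (‖x‖ : ℂ)⁻¹ * (‖x‖ : ℂ)⁻¹
              - -(Complex.I * lam) * (((‖x‖ : ℂ)) ^ 2)⁻¹ * (‖x‖ : ℂ)⁻¹))
            * ((x j : ℂ) * (x j : ℂ))
        + w x * Complex.exp (-(Complex.I * lam * (‖x‖ : ℂ))) * -(Complex.I * lam) * (‖x‖ : ℂ)⁻¹ := by
    intro j
    have hqC : HasFDerivAt (fun y : E3 => ((‖y‖⁻¹ * y j : ℝ) : ℂ))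
        (Complex.ofRealCLM.comp (‖x‖⁻¹ • (EuclideanSpace.proj (𝕜 := ℝ) j : E3 →L[ℝ] ℝ)
          + (x j) • ((-(‖x‖ ^ 2)⁻¹) • (‖x‖⁻¹ • innerSL ℝ x)))) x :=
      Complex.ofRealCLM.hasFDerivAt.comp x (hq j)
    have hg : HasFDerivAt (fun y : E3 => -(Complex.I * lam) * ((‖y‖⁻¹ * y j : ℝ) : ℂ))
        ((-(Complex.I * lam)) • (Complex.ofRealCLM.comp
          (‖x‖⁻¹ • (EuclideanSpace.proj (𝕜 := ℝ) j : E3 →L[ℝ] ℝ)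
            + (x j) • ((-(‖x‖ ^ 2)⁻¹) • (‖x‖⁻¹ • innerSL ℝ x))))) x :=
      hqC.const_mul _
    have hφg := (phi_hasFDerivAt lam hx0).mul hg
    have hterm2 := (hwd x hx).hasFDerivAt.mul hφg
    have hterm1 := (phi_hasFDerivAt lam hx0).mul (hDwj j)
    have hFj := hterm1.add hterm2
    have heq := (hGF j).fderiv_eq.trans hFj.fderiv
    rw [heq]
    simp only [ContinuousLinearMap.add_apply, ContinuousLinearMap.smul_apply,
      ContinuousLinearMap.coe_comp', Function.comp_apply, Complex.ofRealCLM_apply,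
      ContinuousLinearMap.coe_smul', Pi.smul_apply, inner_ebasis, smul_eq_mul,
      ContinuousLinearMap.apply_apply, PiLp.proj_apply, ContinuousLinearMap.coe_add',
      Pi.add_apply, Pi.mul_apply]
    simp only [ebasis, EuclideanSpace.single_apply, if_pos rfl]
    push_cast
    ring
  -- sum identities
  have hlapwB : ∑ j : Fin 3, fderiv ℝ (fderiv ℝ w) x (ebasis j) (ebasis j)
      = ∑ j : Fin 3, fderiv ℝ (fun y => fderiv ℝ w y (ebasis j)) x (ebasis j) := by
    refine (Finset.sum_congr rfl fun j _ => ?_)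
    rw [(hDwj j).fderiv]
    simp
  have hxrep : ∑ j : Fin 3, x j • ebasis j = x := by
    ext i
    rw [show ((∑ j : Fin 3, x j • ebasis j) i) = ∑ j : Fin 3, (x j • ebasis j) i by
      rw [WithLp.ofLp_sum, Finset.sum_apply]]
    simp [ebasis, EuclideanSpace.single_apply]
  have hS : fderiv ℝ w x x = ∑ j : Fin 3, (x j : ℂ) * fderiv ℝ w x (ebasis j) := by
    have h := map_sum (fderiv ℝ w x) (fun j : Fin 3 => x j • ebasis j) Finset.univ
    rw [hxrep] at h
    rw [h]
    exact Finset.sum_congr rfl fun j _ => by rw [map_smul, Complex.real_smul]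
  have hX2 : ∑ j : Fin 3, ((x j : ℂ) * (x j : ℂ)) = (‖x‖ : ℂ) * (‖x‖ : ℂ) := by
    have hx2R : (∑ j : Fin 3, x j * x j) = ‖x‖ * ‖x‖ := by
      rw [← real_inner_self_eq_norm_mul_norm]
      simp only [PiLp.inner_apply, RCLike.inner_apply, conj_trivial]
    rw [← Complex.ofReal_mul, ← hx2R]
    push_cast
    rfl
  -- assemble the Laplacian of v
  have hlapv : lap (fun z => Complex.exp (-(Complex.I * lam * (‖z‖ : ℂ))) * w z) x
      = Complex.exp (-(Complex.I * lam * (‖x‖ : ℂ))) * lap w x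
        + (2 * Complex.exp (-(Complex.I * lam * (‖x‖ : ℂ))) * -(Complex.I * lam) * (‖x‖ : ℂ)⁻¹)
            * fderiv ℝ w x x
        + (w x * Complex.exp (-(Complex.I * lam * (‖x‖ : ℂ))) *
            (-(Complex.I * lam) * -(Complex.I * lam) * (‖x‖ : ℂ)⁻¹ * (‖x‖ : ℂ)⁻¹
              - -(Complex.I * lam) * (((‖x‖ : ℂ)) ^ 2)⁻¹ * (‖x‖ : ℂ)⁻¹))
            * ((‖x‖ : ℂ) * (‖x‖ : ℂ))
        + 3 * (w x * Complex.exp (-(Complex.I * lam * (‖x‖ : ℂ))) * -(Complex.I * lam)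
            * (‖x‖ : ℂ)⁻¹) := by
    simp only [lap]
    rw [Finset.sum_congr rfl fun j _ => key j]
    rw [Finset.sum_add_distrib, Finset.sum_add_distrib, Finset.sum_add_distrib,
      ← Finset.mul_sum, ← Finset.mul_sum, ← Finset.mul_sum, Finset.sum_const,
      Finset.card_univ, Fintype.card_fin, hlapwB, ← hS, hX2]
    push_cast
    ring
  -- the Helmholtz equation at x
  have hlapw : lap w x = -(Complex.I * lam) * -(Complex.I * lam) * w x := by
    have h0 := hhelm x hx
    have h1 : lap w x = -(lam ^ 2 * w x) := by linear_combination h0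
    rw [h1]
    linear_combination (-(lam ^ 2 * w x)) * Complex.I_mul_I
  -- the radial derivative of v
  have hrad : radDeriv (fun z => Complex.exp (-(Complex.I * lam * (‖z‖ : ℂ))) * w z) x
      = ((‖x‖⁻¹ : ℝ) : ℂ) * (Complex.exp (-(Complex.I * lam * (‖x‖ : ℂ))) * fderiv ℝ w x x
          + w x * (Complex.exp (-(Complex.I * lam * (‖x‖ : ℂ))) * -(Complex.I * lam)
              * ((‖x‖⁻¹ * (‖x‖ * ‖x‖) : ℝ) : ℂ))) := by
    simp only [radDeriv]
    rw [(hvd x hx).fderiv]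
    simp only [ContinuousLinearMap.add_apply, ContinuousLinearMap.smul_apply, map_smul,
      ContinuousLinearMap.coe_comp', Function.comp_apply, Complex.ofRealCLM_apply,
      ContinuousLinearMap.coe_smul', Pi.smul_apply, innerSL_apply_apply, smul_eq_mul,
      Complex.real_smul]
    rw [show (inner ℝ x x : ℝ) = ‖x‖ * ‖x‖ from real_inner_self_eq_norm_mul_norm x]
  simp only [hlapv, hlapw, hrad]
  push_cast
  rw [div_mul_eq_mul_div, eq_div_iff hrC]
  field_simp
  ring
end
end

section
/- Let v : ℝ³ → ℂ be C² on an open set U and set F := ∇v. Then for every x ∈ U, −Re( (div F)(x) · (x · F̄(x)) ) = −div( Re( F (x · F̄) ) − (1/2) x |F|² )(x) − (1/2)|F(x)|², where x · F̄ = Σ_i x_i F̄_i, |F|² = Σ_i |F_i|², and div G = Σ_j ∂_{x_j} G_j; equivalently −Re( Δv (x·∇v̄) ) = −div( Re(∇v (x·∇v̄)) − (1/2)x|∇v|² ) − (1/2)|∇v|². -/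
noncomputable section

open Metric

/-- The pointwise divergence identity behind the Morawetz multiplier computation:
with `F = ∇v`,
`-Re((div F)(x·F̄)) = -div(Re(F (x·F̄)) - ½ x |F|²) - ½|F|²`. -/
theorem morawetz_divergence_identity (U : Set E3) (hU : IsOpen U) (v : E3 → ℂ)
    (hv : ContDiffOn ℝ 2 v U) (x : E3) (hx : x ∈ U) :
    -((lap v x) * (∑ i : Fin 3,
        (x i : ℂ) * (starRingEnd ℂ) (fderiv ℝ v x (ebasis i)))).re
      = -(∑ j : Fin 3, fderiv ℝ (fun y =>
            ((fderiv ℝ v y (ebasis j)) * (∑ i : Fin 3,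
              (y i : ℂ) * (starRingEnd ℂ) (fderiv ℝ v y (ebasis i)))).re
            - (1 / 2) * y j * ∑ i : Fin 3, ‖fderiv ℝ v y (ebasis i)‖ ^ 2)
          x (ebasis j))
        - (1 / 2) * ∑ i : Fin 3, ‖fderiv ℝ v x (ebasis i)‖ ^ 2 := by
  
  have hnorm : ∀ z : ℂ, ‖z‖ ^ 2 = (z * (starRingEnd ℂ) z).re := fun z => by
    rw [Complex.mul_conj, Complex.ofReal_re, Complex.normSq_eq_norm_sq]
  have hvdiff : ∀ᶠ y in nhds x, HasFDerivAt v (fderiv ℝ v y) y := by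
    filter_upwards [hU.mem_nhds hx] with y hy
    exact ((hv.differentiableOn two_ne_zero).differentiableAt (hU.mem_nhds hy)).hasFDerivAt
  have hΦc : ContDiffOn ℝ 1 (fderiv ℝ v) U := hv.fderiv_of_isOpen hU (by norm_num)
  have hΦd : DifferentiableAt ℝ (fderiv ℝ v) x :=
    (hΦc.differentiableOn one_ne_zero).differentiableAt (hU.mem_nhds hx)
  set Φ' := fderiv ℝ (fderiv ℝ v) x with hΦ'def
  have hΦ' : HasFDerivAt (fderiv ℝ v) Φ' x := hΦd.hasFDerivAt
  have hsym : ∀ a b, Φ' a b = Φ' b a := fun a b =>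
    second_derivative_symmetric_of_eventually hvdiff hΦ' a b
  have hF : ∀ i : Fin 3, HasFDerivAt (fun y => fderiv ℝ v y (ebasis i))
      ((ContinuousLinearMap.apply ℝ ℂ (ebasis i)).comp Φ') x :=
    fun i => (ContinuousLinearMap.apply ℝ ℂ (ebasis i)).hasFDerivAt.comp x hΦ'
  have hcoord : ∀ i : Fin 3, HasFDerivAt (fun y : E3 => ((y i : ℝ) : ℂ))
      (Complex.ofRealCLM.comp (EuclideanSpace.proj i : E3 →L[ℝ] ℝ)) x :=
    fun i => Complex.ofRealCLM.hasFDerivAt.comp x (EuclideanSpace.proj i : E3 →L[ℝ] ℝ).hasFDerivAt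
  have hconj : ∀ i : Fin 3, HasFDerivAt (fun y => (starRingEnd ℂ) (fderiv ℝ v y (ebasis i)))
      ((Complex.conjCLE.toContinuousLinearMap).comp
        ((ContinuousLinearMap.apply ℝ ℂ (ebasis i)).comp Φ')) x :=
    fun i => (Complex.conjCLE.toContinuousLinearMap).hasFDerivAt.comp x (hF i)
  have hS : HasFDerivAt (fun y : E3 => ∑ i : Fin 3,
      ((y i : ℝ) : ℂ) * (starRingEnd ℂ) (fderiv ℝ v y (ebasis i))) _ x :=
    HasFDerivAt.fun_sum (fun i _ => (hcoord i).fun_mul (hconj i))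
  have hN : HasFDerivAt (fun y : E3 => ∑ i : Fin 3,
      ((fderiv ℝ v y (ebasis i)) * (starRingEnd ℂ) (fderiv ℝ v y (ebasis i))).re) _ x :=
    HasFDerivAt.fun_sum (fun i _ => Complex.reCLM.hasFDerivAt.comp x ((hF i).fun_mul (hconj i)))
  have hyj : ∀ j : Fin 3, HasFDerivAt (fun y : E3 => (1/2 : ℝ) * y j) _ x :=
    fun j => (EuclideanSpace.proj j : E3 →L[ℝ] ℝ).hasFDerivAt.const_mul (1/2 : ℝ)
  have key : ∀ j : Fin 3, HasFDerivAt
      (fun y : E3 => ((fderiv ℝ v y (ebasis j)) * (∑ i : Fin 3,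
          ((y i : ℝ) : ℂ) * (starRingEnd ℂ) (fderiv ℝ v y (ebasis i)))).re
        - (1/2 : ℝ) * y j * ∑ i : Fin 3,
          ((fderiv ℝ v y (ebasis i)) * (starRingEnd ℂ) (fderiv ℝ v y (ebasis i))).re) _ x :=
    fun j => HasFDerivAt.fun_sub
      (Complex.reCLM.hasFDerivAt.comp x ((hF j).fun_mul hS))
      ((hyj j).fun_mul hN)
  have hlap : lap v x = ∑ j : Fin 3, Φ' (ebasis j) (ebasis j) := by
    unfold lap
    refine Finset.sum_congr rfl fun j _ => ?_
    rw [(hF j).fderiv]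
    simp
  simp only [hnorm]
  have hval := fun j : Fin 3 => (key j).fderiv
  rw [hlap]
  simp only [hval]
  simp only [ContinuousLinearMap.sub_apply, ContinuousLinearMap.add_apply,
    ContinuousLinearMap.smul_apply, ContinuousLinearMap.coe_comp', Function.comp_apply,
    ContinuousLinearMap.coe_sum', Finset.sum_apply, ContinuousLinearMap.apply_apply,
    Complex.ofRealCLM_apply, Complex.reCLM_apply, ContinuousLinearEquiv.coe_coe,
    Complex.conjCLE_apply, PiLp.proj_apply,
    smul_eq_mul, Complex.real_smul, Fin.sum_univ_three]
  have ebasis_apply : ∀ j i : Fin 3, (ebasis j) i = if i = j then 1 else 0 := fun j i => by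
    simp [ebasis, EuclideanSpace.single_apply]
  simp only [ebasis_apply, Fin.reduceEq, reduceIte]
  norm_num
  rw [hsym (ebasis 1) (ebasis 0), hsym (ebasis 2) (ebasis 0), hsym (ebasis 2) (ebasis 1)]
  ring
end
end

section
/- Let u : ℝ × ℝ³ → ℂ be C² on an open set, let □u := −∂_t²u + Δ_x u and V u := t ∂_t u + x · ∇_x u. Then pointwise (Protter's energy identity): −Re( (V u + u) · □ū ) = div_x( −Re( (V u + u) ∇_x ū ) + (1/2) x ( |∇_x u|² − |∂_t u|² ) ) + ∂_t( Re( (V u + u) ∂_t ū ) + (1/2) t ( |∇_x u|² − |∂_t u|² ) ). -/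
noncomputable section

open Metric

/-- space-time ℝ_t × ℝ³_x -/
abbrev P3 : Type := ℝ × E3

/-- time derivative ∂_t u -/
def dtD (u : P3 → ℂ) (p : P3) : ℂ := fderiv ℝ u p (1, 0)

/-- spatial partial derivative ∂_{x_j} u -/
def dxD (j : Fin 3) (u : P3 → ℂ) (p : P3) : ℂ := fderiv ℝ u p (0, ebasis j)

/-- the d'Alembertian □u = -∂_t²u + Δ_x u -/
def boxD (u : P3 → ℂ) (p : P3) : ℂ :=
  -(fderiv ℝ (fun q => dtD u q) p (1, 0))
    + ∑ j : Fin 3, fderiv ℝ (fun q => dxD j u q) p (0, ebasis j)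

/-- the scaling vector field V u = t ∂_t u + x·∇_x u -/
def scalV (u : P3 → ℂ) (p : P3) : ℂ :=
  p.1 * dtD u p + ∑ j : Fin 3, (p.2 j : ℂ) * dxD j u p

/-- squared spatial gradient |∇_x u|² -/
def gradxSq (u : P3 → ℂ) (p : P3) : ℝ := ∑ j : Fin 3, ‖dxD j u p‖ ^ 2

def starCLM : ℂ →L[ℝ] ℂ := ((starL' ℝ : ℂ ≃L[ℝ] ℂ) : ℂ →L[ℝ] ℂ)

theorem hasFDerivAt_re {f : P3 → ℂ} {f' : P3 →L[ℝ] ℂ} {p : P3} (h : HasFDerivAt f f' p) :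
    HasFDerivAt (fun q => (f q).re) (Complex.reCLM.comp f') p :=
  (Complex.reCLM.hasFDerivAt.comp p h : _)

theorem hns (z : ℂ) : ‖z‖ ^ 2 = (z * star z).re := by
  rw [show star z = (starRingEnd ℂ) z from rfl, Complex.mul_conj]
  simp [Complex.sq_norm]

section Aux
variable (u : P3 → ℂ) (p : P3) (B : P3 → P3 →L[ℝ] ℂ)

def Tc : P3 →L[ℝ] ℂ := Complex.ofRealCLM.comp (ContinuousLinearMap.fst ℝ ℝ E3)
def Xr (j : Fin 3) : P3 →L[ℝ] ℝ :=
  (EuclideanSpace.proj j : E3 →L[ℝ] ℝ).comp (ContinuousLinearMap.snd ℝ ℝ E3)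
def Xc (j : Fin 3) : P3 →L[ℝ] ℂ := Complex.ofRealCLM.comp (Xr j)
def Wd : P3 →L[ℝ] ℂ :=
  (((p.1 : ℂ) • B (1,0) + fderiv ℝ u p (1,0) • Tc)
    + ∑ k : Fin 3, (((p.2 k : ℝ) : ℂ) • B (0, ebasis k) + fderiv ℝ u p (0, ebasis k) • Xc k))
  + fderiv ℝ u p
def Sd (w : P3) : P3 →L[ℝ] ℝ :=
  Complex.reCLM.comp (fderiv ℝ u p w • (starCLM.comp (B w)) + star (fderiv ℝ u p w) • B w)
def Ed : P3 →L[ℝ] ℝ := (∑ k : Fin 3, Sd u p B (0, ebasis k)) - Sd u p B (1,0)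
def Ev : ℝ := (∑ k : Fin 3, (fderiv ℝ u p (0, ebasis k) * star (fderiv ℝ u p (0, ebasis k))).re)
               - (fderiv ℝ u p (1,0) * star (fderiv ℝ u p (1,0))).re
def Wv : ℂ := scalV u p + u p

def Dspace (j : Fin 3) : P3 →L[ℝ] ℝ :=
  -(Complex.reCLM.comp (Wv u p • (starCLM.comp (B (0, ebasis j)))
      + star (fderiv ℝ u p (0, ebasis j)) • Wd u p B))
  + ((1 / 2 * p.2 j) • Ed u p B + Ev u p • ((1 / 2 : ℝ) • Xr j))

def Dtime : P3 →L[ℝ] ℝ :=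
  (Complex.reCLM.comp (Wv u p • (starCLM.comp (B (1,0)))
      + star (fderiv ℝ u p (1,0)) • Wd u p B))
  + ((1 / 2 * p.1) • Ed u p B + Ev u p • ((1 / 2 : ℝ) • (ContinuousLinearMap.fst ℝ ℝ E3)))

variable {u p B}

theorem hW (hu' : HasFDerivAt u (fderiv ℝ u p) p)
    (hB : ∀ w, HasFDerivAt (fun q => fderiv ℝ u q w) (B w) p) :
    HasFDerivAt (fun q => scalV u q + u q) (Wd u p B) p := by
  unfold scalV dtD dxD Wd
  exact ((((Tc).hasFDerivAt.mul (hB (1,0))).add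
    (HasFDerivAt.fun_sum fun k _ => (Xc k).hasFDerivAt.mul (hB (0, ebasis k)))).add hu')

theorem hSq (hB : ∀ w, HasFDerivAt (fun q => fderiv ℝ u q w) (B w) p) (w : P3) :
    HasFDerivAt (fun q => (fderiv ℝ u q w * star (fderiv ℝ u q w)).re) (Sd u p B w) p :=
  hasFDerivAt_re ((hB w).mul (hB w).star)

theorem hE (hB : ∀ w, HasFDerivAt (fun q => fderiv ℝ u q w) (B w) p) :
    HasFDerivAt (fun q => (∑ k : Fin 3, (fderiv ℝ u q (0, ebasis k) * star (fderiv ℝ u q (0, ebasis k))).re)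
      - (fderiv ℝ u q (1,0) * star (fderiv ℝ u q (1,0))).re) (Ed u p B) p :=
  (HasFDerivAt.fun_sum fun k _ => hSq hB (0, ebasis k)).sub (hSq hB (1,0))

end Aux
section Aux2
variable {u : P3 → ℂ} {p : P3} {B : P3 → P3 →L[ℝ] ℂ}

theorem auxSpace (hu' : HasFDerivAt u (fderiv ℝ u p) p)
    (hB : ∀ w, HasFDerivAt (fun q => fderiv ℝ u q w) (B w) p) (j : Fin 3) :
    HasFDerivAt (fun q : P3 => -(((scalV u q + u q) * star (fderiv ℝ u q (0, ebasis j))).re)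
      + 1 / 2 * q.2 j * (gradxSq u q - ‖fderiv ℝ u q (1, 0)‖ ^ 2)) (Dspace u p B j) p := by
  have h1 : (fun q : P3 => -(((scalV u q + u q) * star (fderiv ℝ u q (0, ebasis j))).re)
      + 1 / 2 * q.2 j * (gradxSq u q - ‖fderiv ℝ u q (1, 0)‖ ^ 2))
      = (fun q : P3 => -(((scalV u q + u q) * star (fderiv ℝ u q (0, ebasis j))).re)
      + 1 / 2 * (Xr j q) * ((∑ k : Fin 3, (fderiv ℝ u q (0, ebasis k) * star (fderiv ℝ u q (0, ebasis k))).re)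
        - (fderiv ℝ u q (1,0) * star (fderiv ℝ u q (1,0))).re)) := by
    funext q
    simp only [gradxSq, dxD, hns]
    rfl
  rw [h1]
  exact ((hasFDerivAt_re ((hW hu' hB).mul (hB (0, ebasis j)).star)).neg).add
    (((Xr j).hasFDerivAt.const_mul (1/2 : ℝ)).mul (hE hB))

theorem auxTime (hu' : HasFDerivAt u (fderiv ℝ u p) p)
    (hB : ∀ w, HasFDerivAt (fun q => fderiv ℝ u q w) (B w) p) :
    HasFDerivAt (fun q : P3 => (((scalV u q + u q) * star (fderiv ℝ u q (1, 0))).re)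
      + 1 / 2 * q.1 * (gradxSq u q - ‖fderiv ℝ u q (1, 0)‖ ^ 2)) (Dtime u p B) p := by
  have h1 : (fun q : P3 => (((scalV u q + u q) * star (fderiv ℝ u q (1, 0))).re)
      + 1 / 2 * q.1 * (gradxSq u q - ‖fderiv ℝ u q (1, 0)‖ ^ 2))
      = (fun q : P3 => (((scalV u q + u q) * star (fderiv ℝ u q (1, 0))).re)
      + 1 / 2 * ((ContinuousLinearMap.fst ℝ ℝ E3) q) * ((∑ k : Fin 3, (fderiv ℝ u q (0, ebasis k) * star (fderiv ℝ u q (0, ebasis k))).re)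
        - (fderiv ℝ u q (1,0) * star (fderiv ℝ u q (1,0))).re)) := by
    funext q
    simp only [gradxSq, dxD, hns]
    rfl
  rw [h1]
  exact (hasFDerivAt_re ((hW hu' hB).mul (hB (1, 0)).star)).add
    (((ContinuousLinearMap.fst ℝ ℝ E3).hasFDerivAt.const_mul (1/2 : ℝ)).mul (hE hB))

end Aux2

set_option maxHeartbeats 2000000 in
/-- Protter's energy identity:
`-Re((Vu+u)□ū) = div_x(-Re((Vu+u)∇_xū) + ½x(|∇_xu|²-|∂_tu|²))
   + ∂_t(Re((Vu+u)∂_tū) + ½t(|∇_xu|²-|∂_tu|²))`. -/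
theorem protter_identity (S : Set P3) (hS : IsOpen S) (u : P3 → ℂ)
    (hu : ContDiffOn ℝ 2 u S) (p : P3) (hp : p ∈ S) :
    -(((scalV u p + u p) * boxD (fun q => (starRingEnd ℂ) (u q)) p).re)
      = (∑ j : Fin 3, fderiv ℝ (fun q =>
            -(((scalV u q + u q) * (starRingEnd ℂ) (dxD j u q)).re)
              + (1 / 2) * q.2 j * (gradxSq u q - ‖dtD u q‖ ^ 2))
          p (0, ebasis j))
        + fderiv ℝ (fun q =>
            ((scalV u q + u q) * (starRingEnd ℂ) (dtD u q)).re
              + (1 / 2) * q.1 * (gradxSq u q - ‖dtD u q‖ ^ 2))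
          p (1, 0) := by
  have hmem : S ∈ nhds p := hS.mem_nhds hp
  have hu2 : ContDiffAt ℝ 2 u p := hu.contDiffAt hmem
  have hdiffev : ∀ᶠ q in nhds p, DifferentiableAt ℝ u q := by
    filter_upwards [hS.eventually_mem hp] with q hq
    exact (hu.contDiffAt (hS.mem_nhds hq)).differentiableAt two_ne_zero
  have hu' : HasFDerivAt u (fderiv ℝ u p) p :=
    (hu2.differentiableAt two_ne_zero).hasFDerivAt
  have hf''d : DifferentiableAt ℝ (fderiv ℝ u) p :=
    (hu2.fderiv_right (by norm_num : (1:WithTop ℕ∞)+1 ≤ 2)).differentiableAt one_ne_zero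
  have hf'' : HasFDerivAt (fderiv ℝ u) (fderiv ℝ (fderiv ℝ u) p) p := hf''d.hasFDerivAt
  have hsymm : ∀ v w, fderiv ℝ (fderiv ℝ u) p v w = fderiv ℝ (fderiv ℝ u) p w v :=
    fun v w => hu2.isSymmSndFDerivAt (by norm_num) v w
  set B : P3 → P3 →L[ℝ] ℂ :=
    fun w => (ContinuousLinearMap.apply ℝ ℂ w).comp (fderiv ℝ (fderiv ℝ u) p) with hBdef
  have hB : ∀ w : P3, HasFDerivAt (fun q => fderiv ℝ u q w) (B w) p :=
    fun w => (ContinuousLinearMap.apply ℝ ℂ w).hasFDerivAt.comp p hf''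
  simp only [boxD, dtD, dxD, starRingEnd_apply]
  -- conj second derivatives
  have hstar_ev : ∀ w : P3,
      fderiv ℝ (fun q => fderiv ℝ (fun y => star (u y)) q w) p = starCLM.comp (B w) := by
    intro w
    have hev : (fun q => fderiv ℝ (fun y => star (u y)) q w)
        =ᶠ[nhds p] (fun q => star (fderiv ℝ u q w)) := by
      filter_upwards [hdiffev] with q hq
      rw [(hq.hasFDerivAt.star).fderiv]
      rfl
    rw [hev.fderiv_eq, ((hB w).star).fderiv]
    rfl
  simp only [hstar_ev]
  simp only [Fin.sum_univ_three]
  rw [(auxSpace hu' hB 0).fderiv, (auxSpace hu' hB 1).fderiv, (auxSpace hu' hB 2).fderiv,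
    (auxTime hu' hB).fderiv]
  simp only [Dspace, Dtime, Wd, Sd, Ed, Ev, Wv, Tc, Xc, Xr, starCLM, hBdef, scalV, dtD, dxD,
    gradxSq, ebasis, ContinuousLinearMap.add_apply, ContinuousLinearMap.coe_comp',
    Function.comp_apply, ContinuousLinearMap.smul_apply, ContinuousLinearMap.neg_apply,
    ContinuousLinearMap.coe_sub', Pi.sub_apply, ContinuousLinearMap.sum_apply,
    ContinuousLinearMap.apply_apply, Complex.reCLM_apply, Complex.ofRealCLM_apply,
    ContinuousLinearMap.coe_fst', ContinuousLinearMap.coe_snd', ContinuousLinearEquiv.coe_coe,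
    starL'_apply, smul_eq_mul, Fin.sum_univ_three, PiLp.proj_apply, EuclideanSpace.single_apply,
    Complex.ofReal_zero, Complex.ofReal_one, mul_zero, zero_mul, add_zero, zero_add, mul_one,
    Fin.reduceEq, reduceIte, if_true, if_false, one_mul, PiLp.zero_apply]
  simp only [hsymm ((0:ℝ), EuclideanSpace.single (0:Fin 3) (1:ℝ)) ((1:ℝ), (0:E3)),
    hsymm ((0:ℝ), EuclideanSpace.single (1:Fin 3) (1:ℝ)) ((1:ℝ), (0:E3)),
    hsymm ((0:ℝ), EuclideanSpace.single (2:Fin 3) (1:ℝ)) ((1:ℝ), (0:E3)),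
    hsymm ((0:ℝ), EuclideanSpace.single (1:Fin 3) (1:ℝ)) ((0:ℝ), EuclideanSpace.single (0:Fin 3) (1:ℝ)),
    hsymm ((0:ℝ), EuclideanSpace.single (2:Fin 3) (1:ℝ)) ((0:ℝ), EuclideanSpace.single (0:Fin 3) (1:ℝ)),
    hsymm ((0:ℝ), EuclideanSpace.single (2:Fin 3) (1:ℝ)) ((0:ℝ), EuclideanSpace.single (1:Fin 3) (1:ℝ))]
  simp only [Complex.star_def, Complex.add_re, Complex.add_im, Complex.mul_re, Complex.mul_im,
    Complex.conj_re, Complex.conj_im, Complex.ofReal_re, Complex.ofReal_im, Complex.neg_re,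
    Complex.neg_im, Complex.sub_re, Complex.sub_im]
  ring
end
end

section
/- Let d > 0, let g : [0,d] → ℝ be continuous and strictly positive, and let f : [0,d] → ℂ be C¹ with f(0) = 0. Then ∫_0^d |f(t)|² g(t) dt ≤ ( (∫_0^d g(t) t dt) / (min_{t ∈ [0,d]} g(t)) ) · ∫_0^d |f'(t)|² g(t) dt. -/
noncomputable section

open MeasureTheory

private lemma cs_aux (t : ℝ) (ht : 0 ≤ t) (h : ℝ → ℝ) (hn : ∀ s, 0 ≤ h s)
    (hc : ContinuousOn h (Set.Icc 0 t)) :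
    (∫ s in (0:ℝ)..t, h s) ^ 2 ≤ t * ∫ s in (0:ℝ)..t, h s ^ 2 := by
  have hpq : (2:ℝ).HolderConjugate 2 := by constructor <;> norm_num
  set μ := volume.restrict (Set.Ioc (0:ℝ) t) with hμ
  have hsub : Set.Ioc (0:ℝ) t ⊆ Set.Icc 0 t := Set.Ioc_subset_Icc_self
  have hmeas : AEStronglyMeasurable h μ :=
    (hc.mono hsub).aestronglyMeasurable measurableSet_Ioc
  obtain ⟨M, hM⟩ := (isCompact_Icc.image_of_continuousOn hc).isBounded.exists_norm_le
  have hMb : ∀ᵐ s ∂μ, ‖h s‖ ≤ M := by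
    filter_upwards [ae_restrict_mem measurableSet_Ioc] with s hs
    exact hM _ ⟨s, hsub hs, rfl⟩
  have hmem : MemLp h 2 μ := MemLp.of_bound hmeas M hMb
  have hmem1 : MemLp (fun _ : ℝ => (1:ℝ)) 2 μ := memLp_const 1
  have key := integral_mul_le_Lp_mul_Lq_of_nonneg hpq
    (ae_of_all μ fun s => hn s) (ae_of_all μ fun _ => zero_le_one)
    (by simpa using hmem) (by simpa using hmem1)
  have hr2 : ∀ x : ℝ, x ^ (2:ℝ) = x ^ 2 := fun x => by
    rw [show (2:ℝ) = ((2:ℕ):ℝ) by norm_num, Real.rpow_natCast]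
  simp only [mul_one, hr2, one_pow] at key
  have hvol : ∫ _ : ℝ, (1:ℝ) ∂μ = t := by
    simp [hμ, Real.volume_Ioc, ht]
  rw [hvol] at key
  have hI2 : 0 ≤ ∫ s, h s ^ 2 ∂μ := integral_nonneg fun s => sq_nonneg _
  have hIn : 0 ≤ ∫ s, h s ∂μ := integral_nonneg fun s => hn s
  have hsq := pow_le_pow_left₀ hIn key 2
  calc (∫ s in (0:ℝ)..t, h s) ^ 2 = (∫ s, h s ∂μ) ^ 2 := by
        rw [intervalIntegral.integral_of_le ht]
    _ ≤ ((∫ s, h s ^ 2 ∂μ) ^ (1/(2:ℝ)) * t ^ (1/(2:ℝ))) ^ 2 := hsq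
    _ = t * ∫ s, h s ^ 2 ∂μ := by
        rw [mul_pow, ← Real.rpow_natCast ((∫ s, h s ^ 2 ∂μ) ^ (1/(2:ℝ))) 2,
          ← Real.rpow_natCast (t ^ (1/(2:ℝ))) 2,
          ← Real.rpow_mul hI2, ← Real.rpow_mul ht]
        norm_num [mul_comm]
    _ = t * ∫ s in (0:ℝ)..t, h s ^ 2 := by rw [intervalIntegral.integral_of_le ht]

/-- A weighted one-dimensional Poincaré-type inequality for functions vanishing
at the left endpoint. -/
theorem weighted_poincare (d : ℝ) (hd : 0 < d) (g : ℝ → ℝ)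
    (hg : ContinuousOn g (Set.Icc 0 d)) (hgpos : ∀ t ∈ Set.Icc 0 d, 0 < g t)
    (f : ℝ → ℂ) (hf : ContDiffOn ℝ 1 f (Set.Icc 0 d)) (hf0 : f 0 = 0) :
    ∫ t in (0 : ℝ)..d, ‖f t‖ ^ 2 * g t
      ≤ ((∫ t in (0 : ℝ)..d, g t * t) / sInf (g '' Set.Icc 0 d))
        * ∫ t in (0 : ℝ)..d, ‖derivWithin f (Set.Icc 0 d) t‖ ^ 2 * g t := by
  set I := Set.Icc (0:ℝ) d with hI
  set f' := derivWithin f I with hf'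
  set m := sInf (g '' I) with hm
  -- positivity of the infimum and the pointwise lower bound
  have hIne : I.Nonempty := Set.nonempty_Icc.2 hd.le
  have himg : IsCompact (g '' I) := isCompact_Icc.image_of_continuousOn hg
  have hmmem : m ∈ g '' I := himg.sInf_mem (hIne.image g)
  have hmpos : 0 < m := by
    obtain ⟨t₀, ht₀, h⟩ := hmmem
    exact h ▸ hgpos t₀ ht₀
  have hmle : ∀ t ∈ I, m ≤ g t := fun t ht =>
    csInf_le himg.isBounded.bddBelow ⟨t, ht, rfl⟩
  -- continuity facts
  have hfc : ContinuousOn f I := hf.continuousOn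
  have hUD : UniqueDiffOn ℝ I := uniqueDiffOn_Icc hd
  have hf'c : ContinuousOn f' I := hf.continuousOn_derivWithin hUD le_rfl
  have hnc : ContinuousOn (fun s => ‖f' s‖) I := hf'c.norm
  -- FTC: f t = ∫_0^t f'
  have hftc : ∀ t ∈ I, f t = ∫ s in (0:ℝ)..t, f' s := by
    intro t ht
    have hderiv : ∀ x ∈ Set.Ioo (0:ℝ) t, HasDerivWithinAt f (f' x) (Set.Ioi x) x := by
      intro x hx
      have hx' : x ∈ I := ⟨hx.1.le, hx.2.le.trans ht.2⟩
      have h1 : HasDerivWithinAt f (f' x) I x :=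
        (hf.differentiableOn one_ne_zero x hx').hasDerivWithinAt
      have h2 : HasDerivAt f (f' x) x :=
        h1.hasDerivAt (Icc_mem_nhds hx.1 (hx.2.trans_le ht.2))
      exact h2.hasDerivWithinAt
    have hint : IntervalIntegrable f' volume 0 t :=
      (hf'c.mono (by rw [Set.uIcc_of_le ht.1]; exact Set.Icc_subset_Icc le_rfl ht.2)).intervalIntegrable
    have := intervalIntegral.integral_eq_sub_of_hasDeriv_right_of_le ht.1
      (hfc.mono (Set.Icc_subset_Icc le_rfl ht.2)) hderiv hint
    rw [this, hf0, sub_zero]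
  -- C = total Dirichlet-type integral without weight
  set C := ∫ s in (0:ℝ)..d, ‖f' s‖ ^ 2 with hC
  have hint2 : IntervalIntegrable (fun s => ‖f' s‖ ^ 2) volume 0 d :=
    ((hnc.pow 2).mono (by rw [Set.uIcc_of_le hd.le])).intervalIntegrable
  have hCnn : 0 ≤ C :=
    intervalIntegral.integral_nonneg hd.le fun s _ => sq_nonneg _
  -- pointwise bound ‖f t‖² ≤ t * C
  have hpt : ∀ t ∈ I, ‖f t‖ ^ 2 ≤ t * C := by
    intro t ht
    have h1 : ‖f t‖ ≤ ∫ s in (0:ℝ)..t, ‖f' s‖ := by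
      rw [hftc t ht]
      exact intervalIntegral.norm_integral_le_integral_norm ht.1
    have hn0 : 0 ≤ ∫ s in (0:ℝ)..t, ‖f' s‖ :=
      intervalIntegral.integral_nonneg ht.1 fun s _ => norm_nonneg _
    have h2 : (∫ s in (0:ℝ)..t, ‖f' s‖) ^ 2 ≤ t * ∫ s in (0:ℝ)..t, ‖f' s‖ ^ 2 :=
      cs_aux t ht.1 _ (fun s => norm_nonneg _)
        (hnc.mono (Set.Icc_subset_Icc le_rfl ht.2))
    have h3 : (∫ s in (0:ℝ)..t, ‖f' s‖ ^ 2) ≤ C :=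
      intervalIntegral.integral_mono_interval le_rfl ht.1 ht.2
        (ae_of_all _ fun s => sq_nonneg _) hint2
    calc ‖f t‖ ^ 2 ≤ (∫ s in (0:ℝ)..t, ‖f' s‖) ^ 2 :=
          pow_le_pow_left₀ (norm_nonneg _) h1 2
      _ ≤ t * ∫ s in (0:ℝ)..t, ‖f' s‖ ^ 2 := h2
      _ ≤ t * C := by nlinarith [ht.1]
  -- integrate the pointwise bound
  have hgi : IntervalIntegrable g volume 0 d :=
    (hg.mono (by rw [Set.uIcc_of_le hd.le])).intervalIntegrable
  have hlhsInt : IntervalIntegrable (fun t => ‖f t‖ ^ 2 * g t) volume 0 d :=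
    (((hfc.norm.pow 2).mul hg).mono (by rw [Set.uIcc_of_le hd.le])).intervalIntegrable
  have hrhsInt : IntervalIntegrable (fun t => g t * t * C) volume 0 d :=
    (((hg.mul (continuousOn_id)).mul continuousOn_const).mono
      (by rw [Set.uIcc_of_le hd.le])).intervalIntegrable
  have hstep1 : ∫ t in (0:ℝ)..d, ‖f t‖ ^ 2 * g t ≤ ∫ t in (0:ℝ)..d, g t * t * C := by
    apply intervalIntegral.integral_mono_on hd.le hlhsInt hrhsInt
    intro t ht
    have hg0 := (hgpos t ht).le
    calc ‖f t‖ ^ 2 * g t ≤ (t * C) * g t := by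
          exact mul_le_mul_of_nonneg_right (hpt t ht) hg0
      _ = g t * t * C := by ring
  have hA : ∫ t in (0:ℝ)..d, g t * t * C = (∫ t in (0:ℝ)..d, g t * t) * C :=
    intervalIntegral.integral_mul_const _ _
  set A := ∫ t in (0:ℝ)..d, g t * t with hAdef
  have hAnn : 0 ≤ A :=
    intervalIntegral.integral_nonneg hd.le fun t ht =>
      mul_nonneg (hgpos t ht).le ht.1
  set B := ∫ t in (0:ℝ)..d, ‖f' t‖ ^ 2 * g t with hB
  -- m * C ≤ B
  have hmC : m * C ≤ B := by
    have h1 : ∫ t in (0:ℝ)..d, ‖f' t‖ ^ 2 * m ≤ B := by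
      apply intervalIntegral.integral_mono_on hd.le
        (hint2.mul_const m)
        (((hnc.pow 2).mul hg).mono (by rw [Set.uIcc_of_le hd.le])).intervalIntegrable
      intro t ht
      exact mul_le_mul_of_nonneg_left (hmle t ht) (sq_nonneg _)
    have h2 : ∫ t in (0:ℝ)..d, ‖f' t‖ ^ 2 * m = C * m :=
      intervalIntegral.integral_mul_const _ _
    rw [h2] at h1
    linarith [h1]
  have hBnn : 0 ≤ B :=
    le_trans (mul_nonneg hmpos.le hCnn) hmC
  have hCle : C ≤ B / m := (le_div_iff₀ hmpos).2 (by linarith [hmC])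
  calc ∫ t in (0:ℝ)..d, ‖f t‖ ^ 2 * g t ≤ A * C := by rw [← hA]; exact hstep1
    _ ≤ A * (B / m) := mul_le_mul_of_nonneg_left hCle hAnn
    _ = (A / m) * B := by ring
end
end
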